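/- arXiv:2402.10556 — 6 statements merged into one kernel-verified Lean document; each statement's English description precedes it below -/
import Mathlib

section
/- In any Jordan algebra over a field of characteristic ≠ 2, the function k(x,y;z,t) := (xy,z,t) - (x,z,t)y - x(y,z,t) is symmetric in x and y, symmetric in z and t, and satisfies k(x,y;z,t) = k(z,t;x,y). -/
/-!
Linearizing the Jordan identity `(x², y, x) = 0` (twice, dividing by `2` each time) gives
`(uv, s, w) + (vw, s, u) + (wu, s, v) = 0`. Expanding `k` in a commutative algebra, each of the
three symmetries of `k` is the difference of two instances of this cyclic identity.
-/

/-- The associator of a bilinear multiplication. -/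
def jassoc {F J : Type*} [Field F] [AddCommGroup J] [Module F J]
    (m : J →ₗ[F] J →ₗ[F] J) (x y z : J) : J :=
  m (m x y) z - m x (m y z)

/-- The Pchelintsev–Shestakov function k(x,y;z,t) = (xy,z,t) - (x,z,t)y - x(y,z,t). -/
def kfun {F J : Type*} [Field F] [AddCommGroup J] [Module F J]
    (m : J →ₗ[F] J →ₗ[F] J) (x y z t : J) : J :=
  jassoc m (m x y) z t - m (jassoc m x z t) y - m x (jassoc m y z t)

section

variable {F J : Type*} [Field F] [AddCommGroup J] [Module F J]

theorem eq_zero_of_add_self_eq_zero_of_two_ne_zero (hchar : (2 : F) ≠ 0) {v : J}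
    (hv : v + v = 0) : v = 0 :=
  (smul_eq_zero.mp (by rwa [two_smul] : (2 : F) • v = 0)).resolve_left hchar

variable (m : J →ₗ[F] J →ₗ[F] J)

theorem jassoc_sq_left_self (jordan : ∀ x y : J, m (m (m x x) y) x = m (m x x) (m y x))
    (a b : J) : jassoc m (m a a) b a = 0 := by
  rw [jassoc, sub_eq_zero]
  exact jordan a b

theorem jassoc_sq_left_linearized (hchar : (2 : F) ≠ 0) (comm : ∀ x y : J, m x y = m y x)
    (hsq : ∀ a b : J, jassoc m (m a a) b a = 0) (a c b : J) :
    jassoc m (m a c) b c + jassoc m (m a c) b c + jassoc m (m c c) b a = 0 := by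
  apply eq_zero_of_add_self_eq_zero_of_two_ne_zero hchar
  have e1 := hsq (a + c) b
  have e2 := hsq (a - c) b
  have e3 := hsq a b
  simp only [jassoc, map_add, map_sub, LinearMap.add_apply, LinearMap.sub_apply, comm]
    at e1 e2 e3 ⊢
  linear_combination (norm := abel1) e1 + e2 - e3 - e3

theorem jassoc_cyclic_sum_eq_zero (hchar : (2 : F) ≠ 0) (comm : ∀ x y : J, m x y = m y x)
    (hlin : ∀ a c b : J,
      jassoc m (m a c) b c + jassoc m (m a c) b c + jassoc m (m c c) b a = 0)
    (u v w s : J) :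
    jassoc m (m u v) s w + jassoc m (m v w) s u + jassoc m (m w u) s v = 0 := by
  apply eq_zero_of_add_self_eq_zero_of_two_ne_zero hchar
  have e1 := hlin u (v + w) s
  have e2 := hlin u v s
  have e3 := hlin u w s
  simp only [jassoc, map_add, LinearMap.add_apply, comm] at e1 e2 e3 ⊢
  linear_combination (norm := abel1) e1 - e2 - e3

theorem kfun_comm_left (comm : ∀ x y : J, m x y = m y x) (x y z t : J) :
    kfun m x y z t = kfun m y x z t := by
  simp only [kfun, jassoc, map_sub, LinearMap.sub_apply, comm]
  abel1

variable (comm : ∀ x y : J, m x y = m y x)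
  (hcyc : ∀ u v w s : J,
    jassoc m (m u v) s w + jassoc m (m v w) s u + jassoc m (m w u) s v = 0)
include comm hcyc

theorem kfun_comm_right (x y z t : J) : kfun m x y z t = kfun m x y t z := by
  have s1 := hcyc x y t z
  have s2 := hcyc x y z t
  simp only [kfun, jassoc, map_sub, LinearMap.sub_apply, comm] at s1 s2 ⊢
  linear_combination (norm := abel1) s1 - s2

theorem kfun_swap_pairs (x y z t : J) : kfun m x y z t = kfun m z t x y := by
  have s1 := hcyc x z t y
  have s2 := hcyc x y z t
  simp only [kfun, jassoc, map_sub, LinearMap.sub_apply, comm] at s1 s2 ⊢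
  linear_combination (norm := abel1) s1 - s2

end

/-- k(x,y;z,t) is symmetric in x,y, symmetric in z,t, and k(x,y;z,t)=k(z,t;x,y). -/
theorem stmt5 {F J : Type*} [Field F] [AddCommGroup J] [Module F J]
    (hchar : (2 : F) ≠ 0)
    (m : J →ₗ[F] J →ₗ[F] J)
    (comm : ∀ x y : J, m x y = m y x)
    (jordan : ∀ x y : J, m (m (m x x) y) x = m (m x x) (m y x))
    (x y z t : J) :
    kfun m x y z t = kfun m y x z t ∧
    kfun m x y z t = kfun m x y t z ∧
    kfun m x y z t = kfun m z t x y := by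
  have hcyc := jassoc_cyclic_sum_eq_zero m hchar comm
    (jassoc_sq_left_linearized m hchar comm (jassoc_sq_left_self m jordan))
  exact ⟨kfun_comm_left m comm x y z t, kfun_comm_right m comm hcyc x y z t,
    kfun_swap_pairs m comm hcyc x y z t⟩
end

section
/- Let J be a unital Jordan algebra over a field of characteristic ≠ 2 and let A be a unital subalgebra of J isomorphic to H₂(F) (the 3-dimensional Jordan algebra of symmetric 2×2 matrices over F), with the same identity element. Then the set Z = {z ∈ J : (z,a,b) = 0 for all a,b ∈ A} is a subalgebra of J. -/
/-- The copy of H₂(F) inside J, spanned by 1, e = e₁₁, h = e₁₂+e₂₁. -/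
def H2span {F J : Type*} [Field F] [AddCommGroup J] [Module F J]
    (one e h : J) : Submodule F J :=
  Submodule.span F {one, e, h}

/-- Z = the set of elements associating with every pair of elements of H₂(F). -/
def Zset {F J : Type*} [Field F] [AddCommGroup J] [Module F J]
    (m : J →ₗ[F] J →ₗ[F] J) (one e h : J) : Set J :=
  {z : J | ∀ a ∈ H2span (F := F) one e h, ∀ b ∈ H2span (F := F) one e h, jassoc m z a b = 0}

/-- N = {n ∈ J : en = ½n, hn = 0}. -/
def Nset {F J : Type*} [Field F] [AddCommGroup J] [Module F J]
    (m : J →ₗ[F] J →ₗ[F] J) (e h : J) : Set J :=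
  {n : J | m e n = (2 : F)⁻¹ • n ∧ m h n = 0}

/-!
Write `L_x` for multiplication by `x`. Linearizing the Jordan identity shows that `L_z` commutes
with `L_e` as soon as `e (e z) = e z`, and with `L_h` as soon as `h (h z) = z`, because `e` is an
idempotent and `h² = 1`. Since `(z, a, b)` is bilinear in `a, b`, membership in `Z` only has to
be tested on `a, b ∈ {1, e, h}`, which amounts to four linear relations in `L_e` and `L_h` applied
to `z`, the first and last of them being exactly these two conditions. So for `z, w ∈ Z`
the operator `L_z` commutes with `L_e` and `L_h`, and carries the relations satisfied by `w` over
to `z w`.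
-/

theorem LinearMap.eq_zero_of_forall_mem_span {R M N P : Type*} [CommSemiring R]
    [AddCommMonoid M] [AddCommMonoid N] [AddCommMonoid P] [Module R M] [Module R N] [Module R P]
    (B : M →ₗ[R] N →ₗ[R] P) {s : Set M} {t : Set N} (hB : ∀ x ∈ s, ∀ y ∈ t, B x y = 0)
    {x : M} (hx : x ∈ Submodule.span R s) {y : N} (hy : y ∈ Submodule.span R t) : B x y = 0 := by
  have hs : ∀ x ∈ s, B x y = 0 := fun x' hx' =>
    LinearMap.eqOn_span (f := B x') (g := 0) (fun y' hy' => hB x' hx' y' hy') hy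
  exact LinearMap.eqOn_span (f := B.flip y) (g := 0) hs hx

section JordanOperators

variable {R J : Type*} [CommRing R] [AddCommGroup J] [Module R J]
  (m : J →ₗ[R] J →ₗ[R] J) (comm : ∀ x y : J, m x y = m y x)
  (jordan : ∀ x y : J, m (m (m x x) y) x = m (m x x) (m y x)) (h2 : IsSMulRegular J (2 : R))

include comm jordan h2

theorem jordan_linearize (x a y : J) :
    (2 : R) • m (m (m x a) y) x + m (m (m x x) y) a =
      (2 : R) • m (m x a) (m y x) + m (m x x) (m y a) := by
  have hplus := jordan (x + a) y
  have hminus := jordan (x - a) y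
  have ha := jordan a y
  simp only [map_add, map_sub, LinearMap.add_apply, LinearMap.sub_apply, comm a x]
    at hplus hminus
  refine h2 ?_
  -- the terms of odd degree in `a` are twice this identity plus twice the Jordan identity for `a`
  linear_combination (norm := module) hplus - hminus - (2 : R) • ha

theorem mul_left_comm_of_mul_eq_self {e a : J} (hee : m e e = e) (hea : m e a = a) (y : J) :
    m e (m a y) = m a (m e y) := by
  have l := jordan_linearize m comm jordan h2 e a y
  rw [hee, hea, comm (m a y) e, comm (m e y) a, comm y e, comm y a] at l
  linear_combination (norm := module) l

theorem mul_left_comm_of_idempotent {e z : J} (hee : m e e = e) (hz : m e (m e z) = m e z)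
    (y : J) : m e (m z y) = m z (m e y) := by
  have l := jordan_linearize m comm jordan h2 e z y
  rw [hee, comm (m (m e z) y) e, mul_left_comm_of_mul_eq_self m comm jordan h2 hee hz,
    comm (m e y) z, comm y e, comm y z] at l
  exact (add_left_cancel l).symm

theorem mul_left_comm_of_sq_eq_one {one h z : J} (one_mul : ∀ x : J, m one x = x)
    (hhh : m h h = one) (hz : m h (m h z) = z) (y : J) : m h (m z y) = m z (m h y) := by
  have l := jordan_linearize m comm jordan h2 h (m h z) y
  rw [hhh, hz, one_mul y, one_mul (m y (m h z)), comm (m z y) h, comm y h] at l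
  exact h2 (add_right_cancel l)

end JordanOperators

section AssociatorNucleus

variable {F J : Type*} [Field F] [AddCommGroup J] [Module F J] (m : J →ₗ[F] J →ₗ[F] J)

theorem jassoc_add_left (z w a b : J) :
    jassoc m (z + w) a b = jassoc m z a b + jassoc m w a b := by
  simp only [jassoc, map_add, LinearMap.add_apply]
  abel

theorem jassoc_smul_left (c : F) (z a b : J) : jassoc m (c • z) a b = c • jassoc m z a b := by
  simp only [jassoc, map_smul, LinearMap.smul_apply, smul_sub]

theorem jassoc_eq_zero_of_mem_span {s : Set J} {z : J} (hz : ∀ a ∈ s, ∀ b ∈ s, jassoc m z a b = 0)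
    {a b : J} (ha : a ∈ Submodule.span F s) (hb : b ∈ Submodule.span F s) : jassoc m z a b = 0 :=
  (m ∘ₗ m z - m.compr₂ (m z)).eq_zero_of_forall_mem_span hz ha hb

variable {m} (comm : ∀ x y : J, m x y = m y x) {one e h : J} (one_mul : ∀ x : J, m one x = x)
include comm one_mul

theorem jassoc_unit_mid (z b : J) : jassoc m z one b = 0 := by
  rw [jassoc, comm z one, one_mul, one_mul, sub_self]

theorem jassoc_unit_right (z a : J) : jassoc m z a one = 0 := by
  rw [jassoc, comm (m z a) one, comm a one, one_mul, one_mul, sub_self]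

theorem mem_Zset_iff (hee : m e e = e) (hhh : m h h = one) (heh : m e h = (2 : F)⁻¹ • h) (z : J) :
    z ∈ Zset m one e h ↔
      m e (m e z) = m e z ∧ m h (m e z) = (2 : F)⁻¹ • m h z ∧
        m e (m h z) = (2 : F)⁻¹ • m h z ∧ m h (m h z) = z := by
  have zee : jassoc m z e e = m e (m e z) - m e z := by
    rw [jassoc, hee, comm z e, comm (m e z) e]
  have zeh : jassoc m z e h = m h (m e z) - (2 : F)⁻¹ • m h z := by
    rw [jassoc, heh, map_smul, comm z e, comm (m e z) h, comm z h]
  have zhe : jassoc m z h e = m e (m h z) - (2 : F)⁻¹ • m h z := by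
    rw [jassoc, comm h e, heh, map_smul, comm z h, comm (m h z) e]
  have zhh : jassoc m z h h = m h (m h z) - z := by
    rw [jassoc, hhh, comm z one, one_mul, comm z h, comm (m h z) h]
  simp only [← sub_eq_zero (b := m e z), ← sub_eq_zero (b := z),
    ← sub_eq_zero (b := (2 : F)⁻¹ • m h z), ← zee, ← zeh, ← zhe, ← zhh]
  have he : e ∈ H2span (F := F) one e h := Submodule.subset_span (by simp)
  have hh : h ∈ H2span (F := F) one e h := Submodule.subset_span (by simp)
  refine ⟨fun hz => ⟨hz e he e he, hz e he h hh, hz h hh e he, hz h hh h hh⟩, ?_⟩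
  rintro ⟨hee', heh', hhe', hhh'⟩ a ha b hb
  refine jassoc_eq_zero_of_mem_span m ?_ ha hb
  simp only [Set.mem_insert_iff, Set.mem_singleton_iff, forall_eq_or_imp, forall_eq,
    jassoc_unit_mid comm one_mul, jassoc_unit_right comm one_mul, hee', heh', hhe', hhh', and_self]

theorem mul_mem_Zset (hchar : (2 : F) ≠ 0)
    (jordan : ∀ x y : J, m (m (m x x) y) x = m (m x x) (m y x))
    (hee : m e e = e) (hhh : m h h = one) (heh : m e h = (2 : F)⁻¹ • h) {z w : J}
    (hz : z ∈ Zset m one e h) (hw : w ∈ Zset m one e h) : m z w ∈ Zset m one e h := by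
  rw [mem_Zset_iff comm one_mul hee hhh heh] at hz hw ⊢
  obtain ⟨hze, -, -, hzh⟩ := hz
  obtain ⟨hwe, hweh, hwhe, hwh⟩ := hw
  have h2 : IsSMulRegular J (2 : F) := .of_ne_zero hchar
  have Le := mul_left_comm_of_idempotent m comm jordan h2 hee hze
  have Lh := mul_left_comm_of_sq_eq_one m comm jordan h2 one_mul hhh hzh
  refine ⟨?_, ?_, ?_, ?_⟩
  · rw [Le, Le, hwe]
  · rw [Le, Lh, hweh, map_smul, Lh]
  · rw [Lh, Le, hwhe, map_smul]
  · rw [Lh, Lh, hwh]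

end AssociatorNucleus

theorem stmt6_general {F J : Type*} [Field F] [AddCommGroup J] [Module F J]
    (hchar : (2 : F) ≠ 0)
    (m : J →ₗ[F] J →ₗ[F] J)
    (comm : ∀ x y : J, m x y = m y x)
    (jordan : ∀ x y : J, m (m (m x x) y) x = m (m x x) (m y x))
    (one e h : J)
    (one_mul : ∀ x : J, m one x = x)
    (hee : m e e = e) (hhh : m h h = one) (heh : m e h = (2 : F)⁻¹ • h) :
    (∀ z ∈ Zset m one e h, ∀ w ∈ Zset m one e h, m z w ∈ Zset m one e h) ∧
    (∀ z ∈ Zset m one e h, ∀ w ∈ Zset m one e h, z + w ∈ Zset m one e h) ∧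
    (∀ c : F, ∀ z ∈ Zset m one e h, c • z ∈ Zset m one e h) := by
  refine ⟨fun z hz w hw => mul_mem_Zset comm one_mul hchar jordan hee hhh heh hz hw,
    fun z hz w hw a ha b hb => ?_, fun c z hz a ha b hb => ?_⟩
  · rw [jassoc_add_left, hz a ha b hb, hw a ha b hb, add_zero]
  · rw [jassoc_smul_left, hz a ha b hb, smul_zero]

/-- Z is a subalgebra of J. -/
theorem stmt6 {F J : Type*} [Field F] [AddCommGroup J] [Module F J]
    (hchar : (2 : F) ≠ 0)
    (m : J →ₗ[F] J →ₗ[F] J)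
    (comm : ∀ x y : J, m x y = m y x)
    (jordan : ∀ x y : J, m (m (m x x) y) x = m (m x x) (m y x))
    (one e h : J)
    (one_mul : ∀ x : J, m one x = x)
    (hee : m e e = e) (hhh : m h h = one) (heh : m e h = (2 : F)⁻¹ • h)
    (hli : LinearIndependent F ![one, e, h]) :
    (∀ z ∈ Zset m one e h, ∀ w ∈ Zset m one e h, m z w ∈ Zset m one e h) ∧
    (∀ z ∈ Zset m one e h, ∀ w ∈ Zset m one e h, z + w ∈ Zset m one e h) ∧
    (∀ c : F, ∀ z ∈ Zset m one e h, c • z ∈ Zset m one e h) :=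
  stmt6_general hchar m comm jordan one e h one_mul hee hhh heh
end

section
/- Let J be a unital Jordan algebra over a field of characteristic ≠ 2 containing H₂(F) as a unital subalgebra, and let Z = {z ∈ J : (z,a,b) = 0 for all a,b ∈ H₂(F)}. Then (Z, J, H₂(F)) = 0, i.e., (z,x,a) = 0 for all z ∈ Z, x ∈ J, a ∈ H₂(F). -/
/-!
Linearizing the Jordan identity `(x², y, x) = 0` in `x` gives `(x², y, u) + 2 (xu, y, x) = 0`.
For `c = h` with `c² = 1` and `u = zc`, the hypothesis `(z, c, c) = 0` says `cu = z`, so the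
identity collapses to `2 (z, y, c) = 0`. For the idempotent `e`, `(z, e, e) = 0` says that
`u = ze` satisfies `eu = u`; the identity at `(e, u)` then gives `(u, y, e) = 0`, and at `(e, z)`
it gives `(z, y, e) = 0`. Since `a ↦ (z, y, a)` is linear, it vanishes on the span of `1, e, h`.
-/

section Associator

variable {F J : Type*} [Field F] [AddCommGroup J] [Module F J] {m : J →ₗ[F] J →ₗ[F] J}

lemma jassoc_eq_zero_of_mem_span_s7 {s : Set J} {x y : J} (hs : ∀ a ∈ s, jassoc m x y a = 0) :
    ∀ a ∈ Submodule.span F s, jassoc m x y a = 0 :=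
  fun _ ha => Submodule.span_le (p := LinearMap.ker (m (m x y) - m x ∘ₗ m y)) |>.mpr hs ha

lemma jassoc_swap (comm : ∀ x y : J, m x y = m y x) (x y z : J) :
    jassoc m x y z = -jassoc m z y x := by
  simp only [jassoc]
  rw [comm (m x y) z, comm x y, comm x (m y z), comm y z]
  abel

lemma jassoc_one_left {one : J} (one_mul : ∀ x : J, m one x = x) (y z : J) :
    jassoc m one y z = 0 := by
  simp [jassoc, one_mul]

lemma jassoc_one_right {one : J} (comm : ∀ x y : J, m x y = m y x)
    (one_mul : ∀ x : J, m one x = x) (x y : J) : jassoc m x y one = 0 := by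
  rw [jassoc_swap comm, jassoc_one_left one_mul, neg_zero]

variable (hchar : (2 : F) ≠ 0) (comm : ∀ x y : J, m x y = m y x)
  (jordan : ∀ x y : J, jassoc m (m x x) y x = 0)
include hchar comm jordan

lemma jassoc_sq_add_two_smul_jassoc (x y u : J) :
    jassoc m (m x x) y u + (2 : F) • jassoc m (m x u) y x = 0 := by
  have hplus := jordan (x + u) y
  have hminus := jordan (x - u) y
  have hu := jordan u y
  simp only [jassoc, map_add, map_sub, LinearMap.add_apply, LinearMap.sub_apply,
    comm u x] at hplus hminus hu ⊢
  have h2 : (2 : F) • (m (m (m x x) y) u - m (m x x) (m y u)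
      + (2 : F) • (m (m (m x u) y) x - m (m x u) (m y x))) = 0 := by
    linear_combination (norm := module) hplus - hminus - (2 : F) • hu
  exact (smul_eq_zero.mp h2).resolve_left hchar

lemma jassoc_eq_zero_of_mul_self_eq_one {one c z : J} (one_mul : ∀ x : J, m one x = x)
    (hc : m c c = one) (hz : jassoc m z c c = 0) (y : J) : jassoc m z y c = 0 := by
  have hcu : m c (m z c) = z := by
    rw [comm, sub_eq_zero.mp hz, hc, comm, one_mul]
  have key := jassoc_sq_add_two_smul_jassoc hchar comm jordan c y (m z c)
  rw [hc, hcu, jassoc_one_left one_mul, zero_add] at key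
  exact (smul_eq_zero.mp key).resolve_left hchar

lemma jassoc_eq_zero_of_idem {e z : J} (he : m e e = e) (hz : jassoc m z e e = 0) (y : J) :
    jassoc m z y e = 0 := by
  have heu : m e (m z e) = m z e := by
    rw [comm, sub_eq_zero.mp hz, he]
  have hu : jassoc m (m z e) y e = 0 := by
    have key := jassoc_sq_add_two_smul_jassoc hchar comm jordan e y (m z e)
    rw [he, heu, jassoc_swap comm e] at key
    linear_combination (norm := module) key
  have key := jassoc_sq_add_two_smul_jassoc hchar comm jordan e y z
  rw [he, comm e z, hu, smul_zero, add_zero, jassoc_swap comm] at key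
  exact neg_eq_zero.mp key

end Associator

theorem stmt7_general {F J : Type*} [Field F] [AddCommGroup J] [Module F J]
    (hchar : (2 : F) ≠ 0)
    (m : J →ₗ[F] J →ₗ[F] J)
    (comm : ∀ x y : J, m x y = m y x)
    (jordan : ∀ x y : J, m (m (m x x) y) x = m (m x x) (m y x))
    (one e h : J)
    (one_mul : ∀ x : J, m one x = x)
    (hee : m e e = e) (hhh : m h h = one) :
    ∀ z ∈ Zset m one e h, ∀ x : J, ∀ a ∈ H2span (F := F) one e h, jassoc m z x a = 0 := by
  intro z hz x
  have jordan' : ∀ x y : J, jassoc m (m x x) y x = 0 := fun x y => sub_eq_zero.mpr (jordan x y)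
  have he : e ∈ H2span (F := F) one e h := Submodule.subset_span (by simp)
  have hh : h ∈ H2span (F := F) one e h := Submodule.subset_span (by simp)
  apply jassoc_eq_zero_of_mem_span_s7
  rintro a (rfl | rfl | rfl)
  · exact jassoc_one_right comm one_mul z x
  · exact jassoc_eq_zero_of_idem hchar comm jordan' hee (hz a he a he) x
  · exact jassoc_eq_zero_of_mul_self_eq_one hchar comm jordan' one_mul hhh (hz a hh a hh) x

/-- (Z, J, H₂(F)) = 0. -/
theorem stmt7 {F J : Type*} [Field F] [AddCommGroup J] [Module F J]
    (hchar : (2 : F) ≠ 0)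
    (m : J →ₗ[F] J →ₗ[F] J)
    (comm : ∀ x y : J, m x y = m y x)
    (jordan : ∀ x y : J, m (m (m x x) y) x = m (m x x) (m y x))
    (one e h : J)
    (one_mul : ∀ x : J, m one x = x)
    (hee : m e e = e) (hhh : m h h = one) (heh : m e h = (2 : F)⁻¹ • h)
    (hli : LinearIndependent F ![one, e, h]) :
    ∀ z ∈ Zset m one e h, ∀ x : J, ∀ a ∈ H2span (F := F) one e h, jassoc m z x a = 0 :=
  stmt7_general hchar m comm jordan one e h one_mul hee hhh
end

section
/- Let J be a unital Jordan algebra over a field of characteristic ≠ 2 containing H₂(F) as a unital subalgebra, and Z = {z ∈ J : (z,a,b) = 0 ∀ a,b ∈ H₂(F)}. Then for all z, v ∈ Z: (ez)(ev) = e(zv) and (hz)(hv) = zv, where e = e₁₁ and h = e₁₂+e₂₁. -/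
/-!
Let `g` be a symmetry, `g² = 1`. The linearized Jordan identity shows that the multiplication
operator `L_g` commutes with `L_{ga}` for every `a`, and hence `L_g³ = L_g`. If `z` and `v` are
fixed by `L_g²`, the same identity gives `g(g(zv)) + zv = 2 (gz)(gv)`, and combining these yields
`(gz)v = g(zv)` and `(gz)(gv) = zv`.

Every `z ∈ Z` satisfies `(z, g, g) = 0` for `g ∈ H₂(F)`, so it is fixed by `L_h²`, and `L_e` is
idempotent on it. The second identity is then the above for `g = h`; the first follows from it for
the symmetry `k = 2e - 1`, writing `e = ½(1 + k)`.
-/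

section

variable {F J : Type*} [Field F] [AddCommGroup J] [Module F J]

structure IsCommJordanMul (m : J →ₗ[F] J →ₗ[F] J) : Prop where
  comm : ∀ x y : J, m x y = m y x
  jordan : ∀ x y : J, m (m (m x x) y) x = m (m x x) (m y x)

namespace IsCommJordanMul

variable {m : J →ₗ[F] J →ₗ[F] J}

theorem jassoc_linearized (hm : IsCommJordanMul m) (hchar : (2 : F) ≠ 0) (x w a y : J) :
    jassoc m (m x w) y a + jassoc m (m x a) y w + jassoc m (m w a) y x = 0 := by
  have hcube : ∀ s : J, jassoc m (m s s) y s = 0 := fun s => sub_eq_zero_of_eq (hm.jordan s y)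
  refine smul_right_injective J hchar ?_
  simp only [smul_zero, two_smul]
  calc _ = jassoc m (m (x + w + a) (x + w + a)) y (x + w + a)
        - jassoc m (m (x + w) (x + w)) y (x + w)
        - jassoc m (m (x + a) (x + a)) y (x + a)
        - jassoc m (m (w + a) (w + a)) y (w + a)
        + jassoc m (m x x) y x + jassoc m (m w w) y w + jassoc m (m a a) y a := by
        simp only [jassoc, map_add, LinearMap.add_apply, hm.comm w x, hm.comm a x, hm.comm a w]
        abel
    _ = 0 := by simp only [hcube, sub_zero, add_zero]

section Symmetry

variable {one g : J}

theorem mul_mul_left_comm_of_mul_self_eq_one (hm : IsCommJordanMul m)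
    (hchar : (2 : F) ≠ 0) (hone : ∀ x : J, m one x = x) (hgg : m g g = one) (a d : J) :
    m g (m (m g a) d) = m (m g a) (m g d) := by
  have hlin := hm.jassoc_linearized hchar g g a d
  have hunit : jassoc m (m g g) d a = 0 := by simp only [jassoc, hgg, hone, sub_self]
  rw [hunit, zero_add, ← two_smul F, smul_eq_zero] at hlin
  have hga : jassoc m (m g a) d g = 0 := hlin.resolve_left hchar
  rw [hm.comm g, hm.comm g d]
  exact sub_eq_zero.mp hga

theorem lmul_cube_of_mul_self_eq_one (hm : IsCommJordanMul m) (hchar : (2 : F) ≠ 0)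
    (hone : ∀ x : J, m one x = x) (hgg : m g g = one) (c : J) :
    m g (m g (m g c)) = m g c := by
  have h := hm.mul_mul_left_comm_of_mul_self_eq_one hchar hone hgg c g
  rwa [hgg, hm.comm _ one, hone, hm.comm _ g] at h

variable {z v : J}

theorem two_smul_mul_mul_mul_of_mul_self_eq_one (hm : IsCommJordanMul m) (hchar : (2 : F) ≠ 0)
    (hone : ∀ x : J, m one x = x) (hgg : m g g = one)
    (hz : m g (m g z) = z) (hv : m g (m g v) = v) :
    (2 : F) • m (m g z) (m g v) = m g (m g (m z v)) + m z v := by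
  have hlin := hm.jassoc_linearized hchar z v g g
  simp only [jassoc] at hlin
  rw [hm.comm (m z g) g, hm.comm z g, hz, hm.comm (m v g) g, hm.comm v g, hv, hgg,
    hm.comm (m z v) one, hone, hm.comm (m z v) g, hm.comm (m g (m z v)) g, hm.comm v z,
    hm.comm (m g v) (m g z)] at hlin
  rw [two_smul, eq_comm, ← sub_eq_zero, ← hlin]
  abel

theorem mul_assoc_of_mul_self_eq_one (hm : IsCommJordanMul m) (hchar : (2 : F) ≠ 0)
    (hone : ∀ x : J, m one x = x) (hgg : m g g = one)
    (hz : m g (m g z) = z) (hv : m g (m g v) = v) : m (m g z) v = m g (m z v) := by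
  have h := congrArg (m g) (hm.two_smul_mul_mul_mul_of_mul_self_eq_one hchar hone hgg hz hv)
  rw [map_add, map_smul, hm.lmul_cube_of_mul_self_eq_one hchar hone hgg,
    hm.mul_mul_left_comm_of_mul_self_eq_one hchar hone hgg, hv, ← two_smul F] at h
  exact smul_right_injective J hchar h

theorem mul_mul_mul_eq_mul_of_mul_self_eq_one (hm : IsCommJordanMul m) (hchar : (2 : F) ≠ 0)
    (hone : ∀ x : J, m one x = x) (hgg : m g g = one)
    (hz : m g (m g z) = z) (hv : m g (m g v) = v) : m (m g z) (m g v) = m z v := by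
  have h := hm.two_smul_mul_mul_mul_of_mul_self_eq_one hchar hone hgg hz hv
  rw [← hm.mul_mul_left_comm_of_mul_self_eq_one hchar hone hgg,
    hm.mul_assoc_of_mul_self_eq_one hchar hone hgg hz hv] at h ⊢
  rw [two_smul] at h
  exact add_left_cancel h

end Symmetry

theorem mul_mul_mul_eq_mul_mul_of_mul_self_eq_self (hm : IsCommJordanMul m) (hchar : (2 : F) ≠ 0)
    {one e z v : J} (hone : ∀ x : J, m one x = x) (hee : m e e = e)
    (hz : m e (m e z) = m e z) (hv : m e (m e v) = m e v) :
    m (m e z) (m e v) = m e (m z v) := by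
  set k : J := (2 : F) • e - one
  have hk : ∀ x : J, m k x = (2 : F) • m e x - x := fun x => by
    simp only [k, map_sub, map_smul, LinearMap.sub_apply, LinearMap.smul_apply, hone]
  have he : ∀ x : J, m e x = (2 : F)⁻¹ • (m k x + x) := fun x => by
    rw [hk, sub_add_cancel, inv_smul_smul₀ hchar]
  have hkk : m k k = one := by
    rw [hk, hm.comm e, hk, hee]
    module
  have hkz : m k (m k z) = z := by
    rw [hk, hk, map_sub, map_smul, hz]
    module
  have hkv : m k (m k v) = v := by
    rw [hk, hk, map_sub, map_smul, hv]
    module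
  have hzkv : m z (m k v) = m k (m z v) := by
    rw [hm.comm z, hm.comm z v, hm.mul_assoc_of_mul_self_eq_one hchar hone hkk hkv hkz]
  rw [he z, he v, he (m z v)]
  simp only [map_smul, LinearMap.smul_apply, map_add, LinearMap.add_apply, smul_add,
    hm.mul_mul_mul_eq_mul_of_mul_self_eq_one hchar hone hkk hkz hkv,
    hm.mul_assoc_of_mul_self_eq_one hchar hone hkk hkz hkv, hzkv]
  match_scalars <;> field_simp <;> norm_num

end IsCommJordanMul

end

theorem stmt11_general {F J : Type*} [Field F] [AddCommGroup J] [Module F J]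
    (hchar : (2 : F) ≠ 0)
    (m : J →ₗ[F] J →ₗ[F] J)
    (comm : ∀ x y : J, m x y = m y x)
    (jordan : ∀ x y : J, m (m (m x x) y) x = m (m x x) (m y x))
    (one e h : J)
    (one_mul : ∀ x : J, m one x = x)
    (hee : m e e = e) (hhh : m h h = one) :
    ∀ z ∈ Zset m one e h, ∀ v ∈ Zset m one e h,
      m (m e z) (m e v) = m e (m z v) ∧ m (m h z) (m h v) = m z v := by
  have hm : IsCommJordanMul m := ⟨comm, jordan⟩
  have hsq : ∀ x ∈ Zset m one e h, ∀ g ∈ H2span (F := F) one e h, m g (m g x) = m (m g g) x := by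
    intro x hx g hg
    rw [comm g (m g x), comm g x, comm (m g g) x, ← sub_eq_zero]
    exact hx g hg g hg
  have he_mem : e ∈ H2span (F := F) one e h := Submodule.subset_span (by simp)
  have hh_mem : h ∈ H2span (F := F) one e h := Submodule.subset_span (by simp)
  have he : ∀ x ∈ Zset m one e h, m e (m e x) = m e x := fun x hx => by
    rw [hsq x hx e he_mem, hee]
  have hh : ∀ x ∈ Zset m one e h, m h (m h x) = x := fun x hx => by
    rw [hsq x hx h hh_mem, hhh, one_mul]
  intro z hz v hv
  exact ⟨hm.mul_mul_mul_eq_mul_mul_of_mul_self_eq_self hchar one_mul hee (he z hz) (he v hv),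
    hm.mul_mul_mul_eq_mul_of_mul_self_eq_one hchar one_mul hhh (hh z hz) (hh v hv)⟩

/-- (ez)(ev) = e(zv) and (hz)(hv) = zv for all z, v ∈ Z. -/
theorem stmt11 {F J : Type*} [Field F] [AddCommGroup J] [Module F J]
    (hchar : (2 : F) ≠ 0)
    (m : J →ₗ[F] J →ₗ[F] J)
    (comm : ∀ x y : J, m x y = m y x)
    (jordan : ∀ x y : J, m (m (m x x) y) x = m (m x x) (m y x))
    (one e h : J)
    (one_mul : ∀ x : J, m one x = x)
    (hee : m e e = e) (hhh : m h h = one) (heh : m e h = (2 : F)⁻¹ • h)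
    (hli : LinearIndependent F ![one, e, h]) :
    ∀ z ∈ Zset m one e h, ∀ v ∈ Zset m one e h,
      m (m e z) (m e v) = m e (m z v) ∧ m (m h z) (m h v) = m z v :=
  stmt11_general hchar m comm jordan one e h one_mul hee hhh
end

section
/- Let J be a unital Jordan algebra over a field of characteristic ≠ 2 containing H₂(F) as a unital subalgebra, with Z and N as in the H₂-decomposition. For z ∈ Z, n ∈ N, the products satisfy (ez)n = ½zn + [z,n]h and (hz)n = 2[z,n](1-2e), where [z,n] = h(z,e,n). -/
/-!
Everything follows from the fully linearized Jordan identity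
`((ab)c)d + ((bd)c)a + ((ad)c)b = (ab)(cd) + (bd)(ca) + (ad)(cb)`, evaluated on a few
choices of `a, b, c, d` among `z, zh, e, h, n`. Since `z` associates with `H₂(F)` we have
`(zh)h = z` and `(zh)e = ½ zh`, and with `hn = 0`, `en = ½ n` these evaluations express
`h(z,e,n)`, `(ez)n` and `(hz)n` through the single element `(zh)n` and its products with `e`, `h`.
-/

section

variable {F J : Type*} [Field F] [AddCommGroup J] [Module F J]

structure IsJordanMul (m : J →ₗ[F] J →ₗ[F] J) : Prop where
  comm : ∀ x y : J, m x y = m y x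
  jordan : ∀ x y : J, m (m (m x x) y) x = m (m x x) (m y x)

namespace IsJordanMul

variable {m : J →ₗ[F] J →ₗ[F] J}

theorem linearized_once (hm : IsJordanMul m) (hchar : (2 : F) ≠ 0) (x u y : J) :
    m (m (m x x) y) u + (2 : F) • m (m (m x u) y) x =
      m (m x x) (m y u) + (2 : F) • m (m x u) (m y x) := by
  have hplus := hm.jordan (x + u) y
  have hminus := hm.jordan (x - u) y
  have hu := hm.jordan u y
  simp only [map_add, map_sub, LinearMap.add_apply, LinearMap.sub_apply] at hplus hminus
  rw [hm.comm u x] at hplus hminus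
  linear_combination (norm := match_scalars <;> (field_simp; try ring))
    (2 : F)⁻¹ • hplus - (2 : F)⁻¹ • hminus - hu

theorem linearized (hm : IsJordanMul m) (hchar : (2 : F) ≠ 0) (a b c d : J) :
    m (m (m a b) c) d + m (m (m b d) c) a + m (m (m a d) c) b =
      m (m a b) (m c d) + m (m b d) (m c a) + m (m a d) (m c b) := by
  have hplus := hm.linearized_once hchar (a + b) d c
  have hminus := hm.linearized_once hchar (a - b) d c
  simp only [map_add, map_sub, LinearMap.add_apply, LinearMap.sub_apply,
    smul_add, smul_sub] at hplus hminus
  rw [hm.comm b a] at hplus hminus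
  linear_combination (norm := match_scalars <;> (field_simp; try ring))
    ((2 : F)⁻¹ * (2 : F)⁻¹) • hplus - ((2 : F)⁻¹ * (2 : F)⁻¹) • hminus

variable (hm : IsJordanMul m) (hchar : (2 : F) ≠ 0) {one e h z n : J}
  (one_mul : ∀ x : J, m one x = x)
include hm hchar one_mul

theorem mul_mul_mul_eq_zero_of_mul_eq_zero (hhh : m h h = one) (hhn : m h n = 0)
    (w : J) : m (m (m w h) n) h = 0 := by
  have L := hm.linearized hchar h w n h
  simp only [hm.comm h w, hm.comm n h, hhn, hhh, one_mul, map_zero, add_zero, zero_add] at L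
  linear_combination (norm := match_scalars <;> (field_simp; try ring)) (2 : F)⁻¹ • L

theorem h_mul_jassoc_eq (hhh : m h h = one) (heh : m e h = (2 : F)⁻¹ • h)
    (hzhh : m (m z h) h = z) (hn : n ∈ Nset m e h) :
    m h (jassoc m z e n) = (2 : F)⁻¹ • m (m z h) n - m (m (m z h) n) e := by
  obtain ⟨hen, hhn⟩ := hn
  have hznh : m (m z n) h = 0 := by
    simpa only [hzhh] using hm.mul_mul_mul_eq_zero_of_mul_eq_zero hchar one_mul hhh hhn (m z h)
  have L := hm.linearized hchar h z n e
  simp only [hm.comm h z, hm.comm n e, hen, hm.comm n h, hhn, hm.comm h e, heh, hm.comm n z,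
    hm.comm h (m z n), hznh, map_smul, LinearMap.smul_apply, map_zero,
    LinearMap.zero_apply, smul_zero, add_zero] at L
  simp only [jassoc, hen, map_sub, map_smul]
  rw [hm.comm h (m (m z e) n), hm.comm h (m z n)]
  linear_combination (norm := match_scalars <;> (field_simp; try ring)) L - (2 : F)⁻¹ • hznh

theorem e_mul_mul_eq (hhh : m h h = one) (heh : m e h = (2 : F)⁻¹ • h)
    (hzhh : m (m z h) h = z) (hn : n ∈ Nset m e h) :
    m (m e z) n =
      (2 : F)⁻¹ • m z n + m ((2 : F)⁻¹ • m (m z h) n - m (m (m z h) n) e) h := by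
  obtain ⟨hen, hhn⟩ := hn
  have hzhnh := hm.mul_mul_mul_eq_zero_of_mul_eq_zero hchar one_mul hhh hhn z
  have L := hm.linearized hchar h (m z h) e n
  simp only [hm.comm h (m z h), hzhh, hhn, hen, heh, hzhnh, map_smul, map_zero,
    LinearMap.zero_apply, smul_zero, add_zero] at L
  rw [hm.comm e z]
  simp only [map_sub, map_smul, LinearMap.sub_apply, LinearMap.smul_apply]
  linear_combination (norm := match_scalars <;> (field_simp; try ring)) L - (2 : F)⁻¹ • hzhnh

theorem h_mul_mul_eq (hee : m e e = e)
    (hzhe : m (m z h) e = (2 : F)⁻¹ • m z h) (hn : n ∈ Nset m e h) :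
    m (m h z) n =
      (2 : F) • m ((2 : F)⁻¹ • m (m z h) n - m (m (m z h) n) e) (one - (2 : F) • e) := by
  have hen := hn.1
  have L := hm.linearized hchar e (m z h) e n
  simp only [hm.comm e (m z h), hzhe, hm.comm n e, hen, hee, hm.comm n (m z h),
    map_smul, LinearMap.smul_apply] at L
  have mul_one : ∀ x, m x one = x := fun x => by rw [hm.comm]; exact one_mul x
  rw [hm.comm h z]
  simp only [map_sub, map_smul, LinearMap.sub_apply, LinearMap.smul_apply, smul_sub, mul_one]
  linear_combination (norm := match_scalars <;> (field_simp; try ring)) (-4 : F) • L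

end IsJordanMul

end

theorem stmt14_general {F J : Type*} [Field F] [AddCommGroup J] [Module F J]
    (hchar : (2 : F) ≠ 0)
    (m : J →ₗ[F] J →ₗ[F] J)
    (comm : ∀ x y : J, m x y = m y x)
    (jordan : ∀ x y : J, m (m (m x x) y) x = m (m x x) (m y x))
    (one e h : J)
    (one_mul : ∀ x : J, m one x = x)
    (hee : m e e = e) (hhh : m h h = one) (heh : m e h = (2 : F)⁻¹ • h) :
    ∀ z ∈ Zset m one e h, ∀ n ∈ Nset m e h,
      m (m e z) n = (2 : F)⁻¹ • m z n + m (m h (jassoc m z e n)) h ∧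
      m (m h z) n = (2 : F) • m (m h (jassoc m z e n)) (one - (2 : F) • e) := by
  intro z hz n hn
  have hm : IsJordanMul m := ⟨comm, jordan⟩
  have heH : e ∈ H2span (F := F) one e h := Submodule.subset_span (by simp)
  have hhH : h ∈ H2span (F := F) one e h := Submodule.subset_span (by simp)
  have hzhh : m (m z h) h = z := by
    simpa [jassoc, hhh, hm.comm _ one, one_mul, sub_eq_zero] using hz h hhH h hhH
  have hzhe : m (m z h) e = (2 : F)⁻¹ • m z h := by
    simpa [jassoc, hm.comm h e, heh, sub_eq_zero] using hz h hhH e heH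
  rw [hm.h_mul_jassoc_eq hchar one_mul hhh heh hzhh hn]
  exact ⟨hm.e_mul_mul_eq hchar one_mul hhh heh hzhh hn,
    hm.h_mul_mul_eq hchar one_mul hee hzhe hn⟩

/-- (ez)n = ½zn + [z,n]h and (hz)n = 2[z,n](1-2e), where [z,n] = h(z,e,n). -/
theorem stmt14 {F J : Type*} [Field F] [AddCommGroup J] [Module F J]
    (hchar : (2 : F) ≠ 0)
    (m : J →ₗ[F] J →ₗ[F] J)
    (comm : ∀ x y : J, m x y = m y x)
    (jordan : ∀ x y : J, m (m (m x x) y) x = m (m x x) (m y x))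
    (one e h : J)
    (one_mul : ∀ x : J, m one x = x)
    (hee : m e e = e) (hhh : m h h = one) (heh : m e h = (2 : F)⁻¹ • h)
    (hli : LinearIndependent F ![one, e, h]) :
    ∀ z ∈ Zset m one e h, ∀ n ∈ Nset m e h,
      m (m e z) n = (2 : F)⁻¹ • m z n + m (m h (jassoc m z e n)) h ∧
      m (m h z) n = (2 : F) • m (m h (jassoc m z e n)) (one - (2 : F) • e) :=
  stmt14_general hchar m comm jordan one e h one_mul hee hhh heh
end

section
/- Let S be a Jordan algebra over a field of characteristic ≠ 2 equipped with an anticommutative bilinear bracket {.,.} satisfying (x,y,z) = 4{y,{x,z}} and {xy,z} = x{y,z} + y{x,z} = {y,xz} + {x,yz} for all x,y,z ∈ S. Then the product x*y := xy + 2{x,y} is associative. -/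
/-!
Expanding both products, `(x * y) * z - x * (y * z)` equals
`(x,y,z) + 2 ({x,y} z + {xy,z} - x{y,z} - {x,yz}) + 4 ({{x,y},z} - {x,{y,z}})`.
The Leibniz rules reduce the middle term to `{x,y} z - z {x,y} = 0`. In a commutative algebra the
cyclic sum of associators vanishes, so `(x,y,z) = 4{y,{x,z}}` forces the Jacobi identity for the
bracket, which turns the last term into `-4{y,{x,z}}` and cancels the associator.
-/

theorem cyclic_sum_associator_eq_zero {M : Type*} [AddCommGroup M] (mul : M → M → M)
    (comm : ∀ x y, mul x y = mul y x) (a b c : M) :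
    (mul (mul a b) c - mul a (mul b c)) + (mul (mul b c) a - mul b (mul c a)) +
      (mul (mul c a) b - mul c (mul a b)) = 0 := by
  rw [comm (mul a b) c, comm (mul b c) a, comm (mul c a) b]
  abel

section Bracket

variable {F S : Type*} [Field F] [AddCommGroup S] [Module F S]

theorem br_br_add_br_br_add_br_br_eq_zero (hchar : (2 : F) ≠ 0) (m br : S →ₗ[F] S →ₗ[F] S)
    (comm : ∀ x y : S, m x y = m y x)
    (hassoc : ∀ x y z : S, m (m x y) z - m x (m y z) = (4 : F) • br y (br x z)) (a b c : S) :
    br b (br a c) + br c (br b a) + br a (br c b) = 0 := by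
  have h4 : (4 : F) ≠ 0 := by
    simpa [show (4 : F) = 2 * 2 by norm_num] using hchar
  have hsum : (4 : F) • (br b (br a c) + br c (br b a) + br a (br c b)) = 0 := by
    rw [smul_add, smul_add, ← hassoc a b c, ← hassoc b c a, ← hassoc c a b]
    exact cyclic_sum_associator_eq_zero (fun x y => m x y) comm a b c
  exact (smul_eq_zero.mp hsum).resolve_left h4

theorem br_br_eq_sub (hchar : (2 : F) ≠ 0) (m br : S →ₗ[F] S →ₗ[F] S)
    (comm : ∀ x y : S, m x y = m y x) (anti : ∀ x y : S, br x y = - br y x)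
    (hassoc : ∀ x y z : S, m (m x y) z - m x (m y z) = (4 : F) • br y (br x z)) (x y z : S) :
    br (br x y) z = br x (br y z) - br y (br x z) := by
  have jacobi := br_br_add_br_br_add_br_br_eq_zero hchar m br comm hassoc x y z
  rw [anti z, anti y x, anti z y, map_neg, map_neg, LinearMap.neg_apply, neg_neg] at jacobi
  linear_combination (norm := abel) jacobi

end Bracket

theorem br_mul_eq_add {R S : Type*} [CommRing R] [AddCommGroup S] [Module R S]
    (m br : S →ₗ[R] S →ₗ[R] S) (anti : ∀ x y : S, br x y = - br y x)
    (hder : ∀ x y z : S, br (m x y) z = m x (br y z) + m y (br x z)) (x y z : S) :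
    br x (m y z) = m y (br x z) + m z (br x y) := by
  rw [anti x, hder, anti z x, anti y x]
  simp only [map_neg, neg_add, neg_neg]

theorem stmt18_general {F S : Type*} [Field F] [AddCommGroup S] [Module F S]
    (hchar : (2 : F) ≠ 0)
    (m : S →ₗ[F] S →ₗ[F] S)
    (comm : ∀ x y : S, m x y = m y x)
    (br : S →ₗ[F] S →ₗ[F] S)
    (anti : ∀ x y : S, br x y = - br y x)
    (hassoc : ∀ x y z : S,
      m (m x y) z - m x (m y z) = (4 : F) • br y (br x z))
    (hder1 : ∀ x y z : S, br (m x y) z = m x (br y z) + m y (br x z)) :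
    ∀ x y z : S,
      (fun u v => m u v + (2 : F) • br u v)
          ((fun u v => m u v + (2 : F) • br u v) x y) z =
      (fun u v => m u v + (2 : F) • br u v) x
          ((fun u v => m u v + (2 : F) • br u v) y z) := by
  intro x y z
  simp only [map_add, map_smul, LinearMap.add_apply, LinearMap.smul_apply, smul_add]
  rw [eq_add_of_sub_eq (hassoc x y z), hder1, br_mul_eq_add m br anti hder1,
    br_br_eq_sub hchar m br comm anti hassoc, comm (br x y) z]
  module

/-- A Jordan algebra with a suitable anticommutative bracket gives an
associative product x*y = xy + 2{x,y}. -/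
theorem stmt18 {F S : Type*} [Field F] [AddCommGroup S] [Module F S]
    (hchar : (2 : F) ≠ 0)
    (m : S →ₗ[F] S →ₗ[F] S)
    (comm : ∀ x y : S, m x y = m y x)
    (jordan : ∀ x y : S, m (m (m x x) y) x = m (m x x) (m y x))
    (br : S →ₗ[F] S →ₗ[F] S)
    (anti : ∀ x y : S, br x y = - br y x)
    (hassoc : ∀ x y z : S,
      m (m x y) z - m x (m y z) = (4 : F) • br y (br x z))
    (hder1 : ∀ x y z : S, br (m x y) z = m x (br y z) + m y (br x z))
    (hder2 : ∀ x y z : S, br (m x y) z = br y (m x z) + br x (m y z)) :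
    ∀ x y z : S,
      (fun u v => m u v + (2 : F) • br u v)
          ((fun u v => m u v + (2 : F) • br u v) x y) z =
      (fun u v => m u v + (2 : F) • br u v) x
          ((fun u v => m u v + (2 : F) • br u v) y z) :=
  stmt18_general hchar m comm br anti hassoc hder1
end
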